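/- (All bases have the same height) Let L be a finite lower semimodular lattice and B ⊆ L a family satisfying: (B1) the elements of B are pairwise incomparable, and (B2) for all B₁, B₂ ∈ B and X, Y ∈ L with X ≤ B₁ and B₂ ≤ Y, there exists B ∈ B with X ≤ B ≤ Y. Then all elements of B have the same height. -/

import Mathlib

/-!
Lower semimodularity makes every cover raise the height by exactly one. For distinct bases
`B₁, B₂`, take `X` with `B₁ ≤ X ⋖ B₁ ⊔ B₂`; then `X ⊓ B₂ ⋖ B₂`, and (B2) gives a base `B` with
`X ⊓ B₂ ≤ B ≤ X`. Hence `B ⊓ B₂ = X ⊓ B₂`, so `|B₂| = |B ⊓ B₂| + 1 ≤ |B|`, while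
`B₁ ⊔ B < B₁ ⊔ B₂`, so induction on `B₁ ⊔ B` gives `|B| ≤ |B₁|`.
-/

/-- The height of an element: length of a maximal chain from the bottom. -/
noncomputable def ht {α : Type*} [Preorder α] (x : α) : ℕ := (Order.height x).toNat

section Height

variable {α : Type*} [Preorder α] [Finite α]

lemma Order.height_ne_top_of_finite (x : α) : Order.height x ≠ ⊤ := by
  have := Fintype.ofFinite α
  refine ne_top_of_le_ne_top (ENat.natCast_ne_top (Fintype.card α)) ?_
  exact Order.height_le fun p _ => mod_cast p.length_lt_card.le

lemma natCast_ht (x : α) : (ht x : ℕ∞) = Order.height x :=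
  ENat.natCast_toNat (Order.height_ne_top_of_finite x)

lemma ht_strictMono : StrictMono (ht : α → ℕ) := fun a b hab => by
  have := Order.height_strictMono hab (Order.height_ne_top_of_finite a).lt_top
  rwa [← natCast_ht, ← natCast_ht, Nat.cast_lt] at this

lemma ht_le_iff {x : α} {n : ℕ} : ht x ≤ n ↔ ∀ y < x, ht y < n := by
  simp only [← Nat.cast_le (α := ℕ∞), ← Nat.cast_lt (α := ℕ∞), natCast_ht,
    Order.height_le_coe_iff]

end Height

section LowerSemimodular

variable {α : Type*} [Lattice α] {a b c : α}

lemma CovBy.sup_eq_of_le_of_not_le (hab : a ⋖ b) (hcb : c ≤ b) (hca : ¬c ≤ a) : a ⊔ c = b :=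
  (hab.eq_or_eq le_sup_left (sup_le hab.le hcb)).resolve_left fun h => hca (h ▸ le_sup_right)

lemma CovBy.inf_covBy_of_le_of_not_le [IsLowerModularLattice α] (hab : a ⋖ b) (hcb : c ≤ b)
    (hca : ¬c ≤ a) : a ⊓ c ⋖ c :=
  IsLowerModularLattice.inf_covBy_of_covBy_sup ((hab.sup_eq_of_le_of_not_le hcb hca).symm ▸ hab)

variable [Finite α] [IsLowerModularLattice α]

theorem CovBy.ht_eq (hab : a ⋖ b) : ht b = ht a + 1 := by
  induction b using WellFoundedLT.induction generalizing a with
  | ind b ih =>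
    refine le_antisymm (ht_le_iff.2 fun y hy => Nat.lt_succ_iff.2 ?_) (ht_strictMono hab.lt)
    by_cases hya : y ≤ a
    · exact ht_strictMono.monotone hya
    · rw [ih y hy (hab.inf_covBy_of_le_of_not_le hy.le hya)]
      exact ht_strictMono <| inf_le_left.lt_of_ne fun h =>
        hab.2 ((h ▸ inf_le_right : a ≤ y).lt_of_not_ge hya) hy

end LowerSemimodular

section Bases

variable {α : Type*} [Lattice α] [Finite α] [IsLowerModularLattice α] {𝓑 : Set α}

theorem exists_mem_sup_lt_and_ht_le (hB1 : IsAntichain (· ≤ ·) 𝓑)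
    (hB2 : ∀ B₁ B₂ X Y, B₁ ∈ 𝓑 → B₂ ∈ 𝓑 → X ≤ B₁ → B₂ ≤ Y → ∃ B ∈ 𝓑, X ≤ B ∧ B ≤ Y)
    {B₁ B₂ : α} (h₁ : B₁ ∈ 𝓑) (h₂ : B₂ ∈ 𝓑) (hne : B₁ ≠ B₂) :
    ∃ B ∈ 𝓑, B₁ ⊔ B < B₁ ⊔ B₂ ∧ ht B₂ ≤ ht B := by
  have hlt : B₁ < B₁ ⊔ B₂ := left_lt_sup.2 fun h => hne (hB1.eq h₂ h₁ h).symm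
  obtain ⟨X, hB₁X, hX⟩ := exists_le_covBy_of_lt hlt
  have hB₂X : ¬B₂ ≤ X := fun h => hX.lt.not_ge (sup_le hB₁X h)
  obtain ⟨B, hB, hXB, hBX⟩ := hB2 B₂ B₁ (X ⊓ B₂) X h₂ h₁ inf_le_right hB₁X
  have hinf : B ⊓ B₂ = X ⊓ B₂ := le_antisymm (inf_le_inf_right _ hBX) (le_inf hXB inf_le_right)
  have hcov : B ⊓ B₂ ⋖ B₂ := hinf ▸ hX.inf_covBy_of_le_of_not_le le_sup_right hB₂X
  have hinf_lt : B ⊓ B₂ < B := inf_le_left.lt_of_ne fun h =>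
    hB₂X (hB1.eq hB h₂ (h ▸ inf_le_right) ▸ hBX)
  refine ⟨B, hB, (sup_le hB₁X hBX).trans_lt hX.lt, ?_⟩
  rw [hcov.ht_eq]
  exact ht_strictMono hinf_lt

theorem ht_le_of_mem (hB1 : IsAntichain (· ≤ ·) 𝓑)
    (hB2 : ∀ B₁ B₂ X Y, B₁ ∈ 𝓑 → B₂ ∈ 𝓑 → X ≤ B₁ → B₂ ≤ Y → ∃ B ∈ 𝓑, X ≤ B ∧ B ≤ Y)
    {B₁ B₂ : α} (h₁ : B₁ ∈ 𝓑) (h₂ : B₂ ∈ 𝓑) : ht B₂ ≤ ht B₁ := by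
  induction B₂ using (InvImage.wf (B₁ ⊔ ·) wellFounded_lt).induction with
  | _ B₂ ih =>
    rcases eq_or_ne B₁ B₂ with rfl | hne
    · exact le_rfl
    obtain ⟨B, hB, hlt, hle⟩ := exists_mem_sup_lt_and_ht_le hB1 hB2 h₁ h₂ hne
    exact hle.trans (ih B hlt hB)

end Bases

theorem bases_same_height_general {α : Type*} [Lattice α] [Fintype α]
    (hLSM : ∀ X Y : α, X ⋖ X ⊔ Y → X ⊓ Y ⋖ Y)
    (𝓑 : Set α)
    (hB1 : ∀ B₁ B₂, B₁ ∈ 𝓑 → B₂ ∈ 𝓑 → B₁ ≤ B₂ → B₁ = B₂)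
    (hB2 : ∀ B₁ B₂ X Y, B₁ ∈ 𝓑 → B₂ ∈ 𝓑 → X ≤ B₁ → B₂ ≤ Y →
        ∃ B ∈ 𝓑, X ≤ B ∧ B ≤ Y) :
    ∀ B₁ B₂, B₁ ∈ 𝓑 → B₂ ∈ 𝓑 → ht B₁ = ht B₂ := by
  have : IsLowerModularLattice α := ⟨hLSM _ _⟩
  have hanti : IsAntichain (· ≤ ·) 𝓑 := fun B₁ h₁ B₂ h₂ hne hle => hne (hB1 B₁ B₂ h₁ h₂ hle)
  exact fun B₁ B₂ h₁ h₂ => le_antisymm (ht_le_of_mem hanti hB2 h₂ h₁) (ht_le_of_mem hanti hB2 h₁ h₂)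

/-- In a finite lower semimodular lattice, a family satisfying (B1) and (B2) has all
elements of the same height. -/
theorem bases_same_height {α : Type*} [Lattice α] [Fintype α] [BoundedOrder α]
    (hLSM : ∀ X Y : α, X ⋖ X ⊔ Y → X ⊓ Y ⋖ Y)
    (𝓑 : Set α)
    (hB1 : ∀ B₁ B₂, B₁ ∈ 𝓑 → B₂ ∈ 𝓑 → B₁ ≤ B₂ → B₁ = B₂)
    (hB2 : ∀ B₁ B₂ X Y, B₁ ∈ 𝓑 → B₂ ∈ 𝓑 → X ≤ B₁ → B₂ ≤ Y →
        ∃ B ∈ 𝓑, X ≤ B ∧ B ≤ Y) :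
    ∀ B₁ B₂, B₁ ∈ 𝓑 → B₂ ∈ 𝓑 → ht B₁ = ht B₂ :=
  bases_same_height_general hLSM 𝓑 hB1 hB2
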